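/- Let s, t be naturals with s > t ≥ 2 and n := C(s,2) + C(t,2). Let G = (L, R, E) be a bipartite graph with deg_G(a) ≤ 2 for every a ∈ R and with distinct left nodes x_1, …, x_6 ∈ L such that deg_G(x_1) = deg_G(x_2) = s, deg_G(x_3) = deg_G(x_4) = t, deg_G(x_5) = deg_G(x_6) = n + 1, and deg_G(u) ≤ 1 for every u ∈ L ∖ {x_1, …, x_6}. If β(G) = n + C(n,2) and |N_G(x_5) ∩ N_G(x_6)| = n, then |N_G(x_1) ∩ N_G(x_2)| = s (i.e., x_1 and x_2 share all their neighbors), |N_G(x_3) ∩ N_G(x_4)| = t (i.e., x_3 and x_4 share all their neighbors), and β_G(x_i, x_j) = 0 for every other pair (i,j) with 1 ≤ i < j ≤ 6, (i,j) ∉ {(1,2), (3,4), (5,6)}. -/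

import Mathlib

open Finset

variable {L R : Type*} [Fintype L] [DecidableEq L] [Fintype R] [DecidableEq R]

/-- The set of neighbors of a left node `u` in the bipartite graph with edge set `E`. -/
def nbrs (E : Finset (L × R)) (u : L) : Finset R :=
  (E.filter (fun e => e.1 = u)).image Prod.snd

/-- The degree of a left node. -/
def ldeg (E : Finset (L × R)) (u : L) : ℕ := (nbrs E u).card

/-- The set of neighbors of a right node `a` in the bipartite graph with edge set `E`. -/
def rnbrs (E : Finset (L × R)) (a : R) : Finset L :=
  (E.filter (fun e => e.2 = a)).image Prod.fst

/-- The degree of a right node. -/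
def rdeg (E : Finset (L × R)) (a : R) : ℕ := (rnbrs E a).card

/-- The butterflies of the bipartite graph with edge set `E`: a butterfly is a pair of
two left nodes and two right nodes all pairwise connected. -/
def butterflies (E : Finset (L × R)) : Finset (Finset L × Finset R) :=
  Finset.univ.filter
    (fun B => B.1.card = 2 ∧ B.2.card = 2 ∧ ∀ u ∈ B.1, ∀ a ∈ B.2, (u, a) ∈ E)

/-- The total number of butterflies. -/
def bfc (E : Finset (L × R)) : ℕ := (butterflies E).card

/-- The number of butterflies containing the left node `u`. -/
def bfcn (E : Finset (L × R)) (u : L) : ℕ :=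
  ((butterflies E).filter (fun B => u ∈ B.1)).card

/-- The number of butterflies containing both left nodes `u` and `v`. -/
def bfcnn (E : Finset (L × R)) (u v : L) : ℕ :=
  ((butterflies E).filter (fun B => u ∈ B.1 ∧ v ∈ B.1)).card

/-- A `q`-BSO transforming edge set `E` into edge set `E'`. -/
def IsBSOStep (q : ℕ) (E E' : Finset (L × R)) : Prop :=
  1 ≤ q ∧ ∃ (S : Fin q → L × R) (σ : Equiv.Perm (Fin q)),
    Function.Injective S ∧ (∀ j, S j ∈ E) ∧ (∀ j, σ j ≠ j) ∧
    (∀ j, ((S j).1, (S (σ j)).2) ∉ E) ∧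
    E' = (E \ Finset.image S Finset.univ) ∪
      Finset.image (fun j => ((S j).1, (S (σ j)).2)) Finset.univ

/-!
Every right node has degree at most 2, so for a fixed left node `u` the common neighbourhoods
`N(u) ∩ N(v)`, `v ≠ u`, are pairwise disjoint subsets of `N(u)`; moreover
`β(u, v) = C(|N(u) ∩ N(v)|, 2)`, and only pairs among `x₁, …, x₆` lie in a butterfly.
Since `x₅` and `x₆` share `n` of their `n + 1` neighbours, each of them shares at most one
neighbour with any other node, so the six pairs among `x₁, …, x₄` carry exactly
`n = C(s, 2) + C(t, 2)` butterflies. Write `cᵢⱼ = |N(xᵢ) ∩ N(xⱼ)|`. By superadditivity of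
`C(·, 2)`, the degree bounds `c₁₂ + c₁₃ + c₁₄ ≤ s`, `c₁₂ + c₂₃ + c₂₄ ≤ s`,
`c₁₃ + c₂₃ + c₃₄ ≤ t`, `c₁₄ + c₂₄ + c₃₄ ≤ t` give four inequalities between sums of
`C(cᵢⱼ, 2)`; each `cᵢⱼ` occurs in exactly two of them, so all four are tight. A tight one has a
single nonzero part, equal to its bound, and `c₁₃, c₁₄ ≤ t < s` leaves only `c₁₂ = s`;
then `c₃₄ = t` and all other `cᵢⱼ` vanish.
-/

theorem Nat.choose_two_add (x y : ℕ) : (x + y).choose 2 = x.choose 2 + y.choose 2 + x * y := by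
  simp [Nat.add_choose_eq, Finset.Nat.antidiagonal_succ, add_comm, add_assoc]

theorem Nat.choose_two_add_add_le {x y z m : ℕ} (h : x + y + z ≤ m) :
    x.choose 2 + y.choose 2 + z.choose 2 ≤ m.choose 2 := by
  obtain ⟨e, rfl⟩ := Nat.exists_eq_add_of_le h
  simp only [Nat.choose_two_add]
  omega

theorem Nat.eq_or_eq_or_eq_of_choose_two_le {x y z m : ℕ} (hm : 2 ≤ m) (h : x + y + z ≤ m)
    (hle : m.choose 2 ≤ x.choose 2 + y.choose 2 + z.choose 2) : x = m ∨ y = m ∨ z = m := by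
  obtain ⟨e, rfl⟩ := Nat.exists_eq_add_of_le h
  simp only [Nat.choose_two_add] at hle
  have hcross : x * y = 0 ∧ (x + y) * z = 0 ∧ (x + y + z) * e = 0 ∧ e < 2 := by
    rw [← Nat.choose_eq_zero_iff]; omega
  simp only [mul_eq_zero, add_eq_zero] at hcross
  omega

theorem Nat.eq_of_sum_choose_two_ge {s t p q a b c d : ℕ} (ht : 2 ≤ t) (hts : t < s)
    (h1 : p + a + b ≤ s) (h2 : p + c + d ≤ s) (h3 : q + a + c ≤ t) (h4 : q + b + d ≤ t)
    (hge : s.choose 2 + t.choose 2 ≤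
      p.choose 2 + q.choose 2 + a.choose 2 + b.choose 2 + c.choose 2 + d.choose 2) :
    p = s ∧ q = t ∧ a = 0 ∧ b = 0 ∧ c = 0 ∧ d = 0 := by
  have i1 := Nat.choose_two_add_add_le h1
  have i2 := Nat.choose_two_add_add_le h2
  have i3 := Nat.choose_two_add_add_le h3
  have i4 := Nat.choose_two_add_add_le h4
  have hp : p = s := by
    rcases Nat.eq_or_eq_or_eq_of_choose_two_le (by omega) h1 (by omega) with h | h | h <;> omega
  have hq : q = t := by
    rcases Nat.eq_or_eq_or_eq_of_choose_two_le ht h3 (by omega) with h | h | h <;> omega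
  omega

theorem Finset.sum_offDiag_insert_of_comm {α M : Type*} [DecidableEq α] [AddCommMonoid M]
    {f : α → α → M} (hf : ∀ x y, f x y = f y x) {s : Finset α} {a : α} (ha : a ∉ s) :
    ∑ p ∈ (insert a s).offDiag, f p.1 p.2 = ∑ p ∈ s.offDiag, f p.1 p.2 + 2 • ∑ v ∈ s, f a v := by
  rw [offDiag_insert ha, sum_union, sum_union]
  · simp [hf _ a, two_smul, add_assoc]
  all_goals grind [disjoint_left]

omit [Fintype L] [Fintype R] in
theorem mem_nbrs {E : Finset (L × R)} {u : L} {a : R} : a ∈ nbrs E u ↔ (u, a) ∈ E := by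
  simp [nbrs]

omit [Fintype L] [Fintype R] in
theorem mem_rnbrs {E : Finset (L × R)} {u : L} {a : R} : u ∈ rnbrs E a ↔ (u, a) ∈ E := by
  simp [rnbrs]

theorem mem_butterflies {E : Finset (L × R)} {B : Finset L × Finset R} :
    B ∈ butterflies E ↔ #B.1 = 2 ∧ #B.2 = 2 ∧ ∀ u ∈ B.1, ∀ a ∈ B.2, (u, a) ∈ E := by
  simp [butterflies]

theorem bfcnn_comm (E : Finset (L × R)) (u v : L) : bfcnn E u v = bfcnn E v u := by
  simp only [bfcnn, and_comm]

theorem bfcnn_eq_choose {E : Finset (L × R)} {u v : L} (huv : u ≠ v) :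
    bfcnn E u v = (#(nbrs E u ∩ nbrs E v)).choose 2 := by
  rw [bfcnn, ← card_powersetCard]
  refine card_nbij' Prod.snd (fun A => ({u, v}, A)) ?_ ?_ ?_ (fun _ _ => rfl)
  · intro B hB
    simp only [mem_coe, mem_filter, mem_butterflies] at hB
    simp only [mem_coe, mem_powersetCard, subset_iff, mem_inter, mem_nbrs]
    exact ⟨fun a ha => ⟨hB.1.2.2 u hB.2.1 a ha, hB.1.2.2 v hB.2.2 a ha⟩, hB.1.2.1⟩
  · intro A hA
    simp only [mem_coe, mem_powersetCard, subset_iff, mem_inter, mem_nbrs] at hA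
    simp only [mem_coe, mem_filter, mem_butterflies, mem_insert, mem_singleton]
    refine ⟨⟨card_pair huv, hA.2, ?_⟩, by simp⟩
    rintro w (rfl | rfl) a ha
    exacts [(hA.1 ha).1, (hA.1 ha).2]
  · intro B hB
    simp only [mem_coe, mem_filter, mem_butterflies] at hB
    have : {u, v} = B.1 := eq_of_subset_of_card_le
      (insert_subset hB.2.1 (singleton_subset_iff.2 hB.2.2)) (by rw [hB.1.1, card_pair huv])
    simp [this]

theorem bfcnn_eq_zero_of_ldeg_le_one {E : Finset (L × R)} {u v : L} (huv : u ≠ v)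
    (h : ldeg E u ≤ 1 ∨ ldeg E v ≤ 1) : bfcnn E u v = 0 := by
  rw [bfcnn_eq_choose huv, Nat.choose_eq_zero_iff]
  rcases h with h | h
  · exact (card_le_card inter_subset_left).trans_lt (Nat.lt_succ_of_le h)
  · exact (card_le_card inter_subset_right).trans_lt (Nat.lt_succ_of_le h)

theorem sum_offDiag_bfcnn (E : Finset (L × R)) :
    ∑ p ∈ (univ : Finset L).offDiag, bfcnn E p.1 p.2 = 2 * bfc E := by
  have hpairs : ∀ B ∈ butterflies E,
      #((univ : Finset L).offDiag.bipartiteBelow (fun p B => p.1 ∈ B.1 ∧ p.2 ∈ B.1) B) = 2 := by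
    intro B hB
    have : (univ : Finset L).offDiag.bipartiteBelow (fun p B => p.1 ∈ B.1 ∧ p.2 ∈ B.1) B =
        B.1.offDiag := by
      ext p
      simp [bipartiteBelow, mem_offDiag, and_comm, and_left_comm]
    rw [this, offDiag_card, (mem_butterflies.1 hB).1]
  rw [bfc, mul_comm, ← smul_eq_mul, ← sum_const, ← sum_congr rfl hpairs]
  exact sum_card_bipartiteAbove_eq_sum_card_bipartiteBelow _

theorem two_mul_bfc_eq_sum_offDiag {E : Finset (L × R)} (S : Finset L)
    (hS : ∀ u ∉ S, ldeg E u ≤ 1) : 2 * bfc E = ∑ p ∈ S.offDiag, bfcnn E p.1 p.2 := by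
  rw [← sum_offDiag_bfcnn]
  refine (sum_subset (offDiag_mono (subset_univ S)) fun p hp hpS => ?_).symm
  rw [mem_offDiag] at hp hpS
  refine bfcnn_eq_zero_of_ldeg_le_one hp.2.2 ?_
  by_contra! h
  exact hpS ⟨of_not_not (mt (hS _) h.1.not_ge), of_not_not (mt (hS _) h.2.not_ge), hp.2.2⟩

theorem bfc_eq_sum_six {E : Finset (L × R)} {x1 x2 x3 x4 x5 x6 : L}
    (hdist : [x1, x2, x3, x4, x5, x6].Nodup)
    (hrest : ∀ u : L, u ∉ ({x1, x2, x3, x4, x5, x6} : Finset L) → ldeg E u ≤ 1) :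
    bfc E = bfcnn E x1 x2 + bfcnn E x1 x3 + bfcnn E x1 x4 + bfcnn E x1 x5 + bfcnn E x1 x6 +
      bfcnn E x2 x3 + bfcnn E x2 x4 + bfcnn E x2 x5 + bfcnn E x2 x6 + bfcnn E x3 x4 +
      bfcnn E x3 x5 + bfcnn E x3 x6 + bfcnn E x4 x5 + bfcnn E x4 x6 + bfcnn E x5 x6 := by
  simp only [List.nodup_cons, List.mem_cons, List.not_mem_nil, or_false, not_or, ← ne_eq] at hdist
  obtain ⟨⟨h12, h13, h14, h15, h16⟩, ⟨h23, h24, h25, h26⟩, ⟨h34, h35, h36⟩, ⟨h45, h46⟩, h56, -⟩ :=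
    hdist
  have := two_mul_bfc_eq_sum_offDiag _ hrest
  simp [sum_offDiag_insert_of_comm (bfcnn_comm E), *] at this
  omega

omit [Fintype L] [Fintype R] in
theorem disjoint_inter_nbrs {E : Finset (L × R)} (hR : ∀ a : R, rdeg E a ≤ 2) {u v w : L}
    (huv : u ≠ v) (huw : u ≠ w) (hvw : v ≠ w) :
    Disjoint (nbrs E u ∩ nbrs E v) (nbrs E u ∩ nbrs E w) := by
  rw [disjoint_left]
  intro a hav haw
  simp only [mem_inter, mem_nbrs] at hav haw
  have hsub : {u, v, w} ⊆ rnbrs E a := by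
    simp only [insert_subset_iff, singleton_subset_iff, mem_rnbrs]
    exact ⟨hav.1, hav.2, haw.2⟩
  have := (card_le_card hsub).trans (hR a)
  rw [card_eq_three.2 ⟨u, v, w, huv, huw, hvw, rfl⟩] at this
  omega

omit [Fintype L] [Fintype R] in
theorem sum_card_inter_nbrs_le {E : Finset (L × R)} (hR : ∀ a : R, rdeg E a ≤ 2) {u : L}
    {vs : Finset L} (hu : u ∉ vs) : ∑ v ∈ vs, #(nbrs E u ∩ nbrs E v) ≤ ldeg E u := by
  rw [← card_biUnion fun v hv w hw hvw =>
    disjoint_inter_nbrs hR (ne_of_mem_of_not_mem hv hu).symm (ne_of_mem_of_not_mem hw hu).symm hvw]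
  exact card_le_card (biUnion_subset.2 fun _ _ => inter_subset_left)

omit [Fintype L] [Fintype R] in
theorem card_inter_add_card_inter_le {E : Finset (L × R)} (hR : ∀ a : R, rdeg E a ≤ 2)
    {u v w : L} (huv : u ≠ v) (huw : u ≠ w) (hvw : v ≠ w) :
    #(nbrs E u ∩ nbrs E v) + #(nbrs E u ∩ nbrs E w) ≤ ldeg E u := by
  simpa [sum_pair hvw] using sum_card_inter_nbrs_le hR (vs := {v, w}) (by simp [huv, huw])

omit [Fintype L] [Fintype R] in
theorem card_inter_add_card_inter_add_card_inter_le {E : Finset (L × R)}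
    (hR : ∀ a : R, rdeg E a ≤ 2) {u v w z : L} (huv : u ≠ v) (huw : u ≠ w) (huz : u ≠ z)
    (hvw : v ≠ w) (hvz : v ≠ z) (hwz : w ≠ z) :
    #(nbrs E u ∩ nbrs E v) + #(nbrs E u ∩ nbrs E w) + #(nbrs E u ∩ nbrs E z) ≤ ldeg E u := by
  have := sum_card_inter_nbrs_le hR (u := u) (vs := {v, w, z}) (by simp [huv, huw, huz])
  rwa [sum_insert (by simp [hvw, hvz]), sum_pair hwz, ← add_assoc] at this

theorem bfcnn_eq_zero_of_ldeg_le_card_inter_add_one {E : Finset (L × R)}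
    (hR : ∀ a : R, rdeg E a ≤ 2) {u v w : L} (huv : u ≠ v) (huw : u ≠ w) (hvw : v ≠ w)
    (h : ldeg E u ≤ #(nbrs E u ∩ nbrs E w) + 1) : bfcnn E v u = 0 := by
  rw [bfcnn_comm, bfcnn_eq_choose huv, Nat.choose_eq_zero_iff]
  have := card_inter_add_card_inter_le hR huv huw hvw
  omega

theorem card_inter_eq_of_choose_two_le_sum_bfcnn {E : Finset (L × R)}
    (hR : ∀ a : R, rdeg E a ≤ 2) {s t : ℕ} (ht : 2 ≤ t) (hts : t < s) {x1 x2 x3 x4 : L}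
    (hdist : [x1, x2, x3, x4].Nodup)
    (h1 : ldeg E x1 = s) (h2 : ldeg E x2 = s) (h3 : ldeg E x3 = t) (h4 : ldeg E x4 = t)
    (hge : s.choose 2 + t.choose 2 ≤ bfcnn E x1 x2 + bfcnn E x3 x4 +
      bfcnn E x1 x3 + bfcnn E x1 x4 + bfcnn E x2 x3 + bfcnn E x2 x4) :
    #(nbrs E x1 ∩ nbrs E x2) = s ∧ #(nbrs E x3 ∩ nbrs E x4) = t ∧
      bfcnn E x1 x3 = 0 ∧ bfcnn E x1 x4 = 0 ∧ bfcnn E x2 x3 = 0 ∧ bfcnn E x2 x4 = 0 := by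
  simp only [List.nodup_cons, List.mem_cons, List.not_mem_nil, or_false, not_or, ← ne_eq] at hdist
  obtain ⟨⟨h12, h13, h14⟩, ⟨h23, h24⟩, h34, -⟩ := hdist
  have d1 := card_inter_add_card_inter_add_card_inter_le hR h12 h13 h14 h23 h24 h34
  have d2 := card_inter_add_card_inter_add_card_inter_le hR h12.symm h23 h24 h13 h14 h34
  have d3 := card_inter_add_card_inter_add_card_inter_le hR h13.symm h23.symm h34 h12 h14 h24
  have d4 := card_inter_add_card_inter_add_card_inter_le hR h14.symm h24.symm h34.symm h12 h13 h23
  simp only [inter_comm (nbrs E x2) (nbrs E x1), inter_comm (nbrs E x3) (nbrs E x1),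
    inter_comm (nbrs E x3) (nbrs E x2), inter_comm (nbrs E x4)] at d2 d3 d4
  simp only [bfcnn_eq_choose h12, bfcnn_eq_choose h34, bfcnn_eq_choose h13, bfcnn_eq_choose h14,
    bfcnn_eq_choose h23, bfcnn_eq_choose h24] at hge ⊢
  obtain ⟨hp, hq, ha, hb, hc, hd⟩ :=
    Nat.eq_of_sum_choose_two_ge ht hts (by omega) (by omega) (by omega) (by omega) hge
  simp [hp, hq, ha, hb, hc, hd]

/-- Under the hypotheses of the previous statement, if moreover `x5` and `x6` share exactly
`n` neighbors, then `x1` and `x2` share all their `s` neighbors, `x3` and `x4` share all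
their `t` neighbors, and no butterfly contains any other pair among `x1, …, x6`. -/
theorem stmt_11 {L R : Type*} [Fintype L] [DecidableEq L] [Fintype R] [DecidableEq R]
    (s t n : ℕ) (hts : t < s) (ht : 2 ≤ t) (hn : n = s.choose 2 + t.choose 2)
    (E : Finset (L × R)) (hR : ∀ a : R, rdeg E a ≤ 2)
    (x1 x2 x3 x4 x5 x6 : L)
    (hdist : List.Pairwise (· ≠ ·) [x1, x2, x3, x4, x5, x6])
    (h1 : ldeg E x1 = s) (h2 : ldeg E x2 = s) (h3 : ldeg E x3 = t) (h4 : ldeg E x4 = t)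
    (h5 : ldeg E x5 = n + 1) (h6 : ldeg E x6 = n + 1)
    (hrest : ∀ u : L, u ∉ ({x1, x2, x3, x4, x5, x6} : Finset L) → ldeg E u ≤ 1)
    (hbfc : bfc E = n + n.choose 2)
    (h56 : (nbrs E x5 ∩ nbrs E x6).card = n) :
    (nbrs E x1 ∩ nbrs E x2).card = s ∧
    (nbrs E x3 ∩ nbrs E x4).card = t ∧
    bfcnn E x1 x3 = 0 ∧ bfcnn E x1 x4 = 0 ∧ bfcnn E x1 x5 = 0 ∧ bfcnn E x1 x6 = 0 ∧
    bfcnn E x2 x3 = 0 ∧ bfcnn E x2 x4 = 0 ∧ bfcnn E x2 x5 = 0 ∧ bfcnn E x2 x6 = 0 ∧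
    bfcnn E x3 x5 = 0 ∧ bfcnn E x3 x6 = 0 ∧ bfcnn E x4 x5 = 0 ∧ bfcnn E x4 x6 = 0 := by
  have hnodup : [x1, x2, x3, x4, x5, x6].Nodup := hdist
  have hsum := bfc_eq_sum_six hnodup hrest
  have h1234 : [x1, x2, x3, x4].Nodup := hnodup.sublist (by simp)
  simp only [List.nodup_cons, List.mem_cons, List.not_mem_nil, or_false, not_or, ← ne_eq] at hnodup
  obtain ⟨⟨-, -, -, h15, h16⟩, ⟨-, -, h25, h26⟩, ⟨-, h35, h36⟩, ⟨h45, h46⟩, h56', -⟩ := hnodup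
  have hx5 : ldeg E x5 ≤ #(nbrs E x5 ∩ nbrs E x6) + 1 := by omega
  have hx6 : ldeg E x6 ≤ #(nbrs E x6 ∩ nbrs E x5) + 1 := by rw [inter_comm]; omega
  have z15 := bfcnn_eq_zero_of_ldeg_le_card_inter_add_one hR h15.symm h56' h16 hx5
  have z25 := bfcnn_eq_zero_of_ldeg_le_card_inter_add_one hR h25.symm h56' h26 hx5
  have z35 := bfcnn_eq_zero_of_ldeg_le_card_inter_add_one hR h35.symm h56' h36 hx5
  have z45 := bfcnn_eq_zero_of_ldeg_le_card_inter_add_one hR h45.symm h56' h46 hx5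
  have z16 := bfcnn_eq_zero_of_ldeg_le_card_inter_add_one hR h16.symm h56'.symm h15 hx6
  have z26 := bfcnn_eq_zero_of_ldeg_le_card_inter_add_one hR h26.symm h56'.symm h25 hx6
  have z36 := bfcnn_eq_zero_of_ldeg_le_card_inter_add_one hR h36.symm h56'.symm h35 hx6
  have z46 := bfcnn_eq_zero_of_ldeg_le_card_inter_add_one hR h46.symm h56'.symm h45 hx6
  have b56 : bfcnn E x5 x6 = n.choose 2 := by rw [bfcnn_eq_choose h56', h56]
  obtain ⟨c12, c34, z13, z14, z23, z24⟩ :=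
    card_inter_eq_of_choose_two_le_sum_bfcnn hR ht hts h1234 h1 h2 h3 h4 (by omega)
  exact ⟨c12, c34, z13, z14, z15, z16, z23, z24, z25, z26, z35, z36, z45, z46⟩
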